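/- Fix 0 < q < 1 and write α := α_q, γ := γ_q. Then: (i) the operator αα* is invertible on ℓ²(ℕ×ℤ); (ii) P := 1 − α*(αα*)⁻¹α is the orthogonal projection onto the closed linear span of {e_{0,k} : k ∈ ℤ}; (iii) the operator w̃ := 1 + (γ − 1)P is unitary and satisfies w̃ e_{n,k} = e_{n,k} for all n ≥ 1 and w̃ e_{0,k} = e_{0,k−1}; (iv) w̃ = γ₀ + α₀*α₀. -/

import Mathlib

/-- `ℓ²(ℕ×ℤ)`: the Hilbert space of square-summable complex families indexed by `ℕ × ℤ`. -/
noncomputable abbrev l2NZ : Type := lp (fun _ : ℕ × ℤ => ℂ) 2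

/-- The standard orthonormal basis vectors `e_{n,k}` of `ℓ²(ℕ×ℤ)`. -/
noncomputable def eNZ (n : ℕ) (k : ℤ) : l2NZ := lp.single 2 (n, k) (1 : ℂ)

/-- The defining property of the operators `α_t, γ_t` on `ℓ²(ℕ×ℤ)`:
`α_t e_{n,k} = √(1−t^{2n}) e_{n−1,k−1}` for `n ≥ 1`, `α_t e_{0,k} = 0`, and
`γ_t e_{n,k} = tⁿ e_{n,k−1}` (with the convention `0⁰ = 1`, so at `t = 0` this reads
`α₀ e_{n,k} = e_{n−1,k−1}` for `n ≥ 1`, `α₀ e_{0,k} = 0`, `γ₀ e_{0,k} = e_{0,k−1}`,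
`γ₀ e_{n,k} = 0` for `n ≥ 1`). -/
def IsAlphaGamma (t : ℝ) (α γ : l2NZ →L[ℂ] l2NZ) : Prop :=
  (∀ (n : ℕ) (k : ℤ),
    α (eNZ (n + 1) k) = (Real.sqrt (1 - t ^ (2 * (n + 1))) : ℂ) • eNZ n (k - 1)) ∧
  (∀ k : ℤ, α (eNZ 0 k) = 0) ∧
  (∀ (n : ℕ) (k : ℤ), γ (eNZ n k) = ((t ^ n : ℝ) : ℂ) • eNZ n (k - 1))

/-- The closed linear span of `{e_{0,k} : k ∈ ℤ}` in `ℓ²(ℕ×ℤ)`. -/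
noncomputable def spanE0 : Submodule ℂ l2NZ :=
  (Submodule.span ℂ (Set.range fun k : ℤ => eNZ 0 k)).topologicalClosure

/-!
On the basis, `α*α + γ*γ = 1` and `αα* = 1 - q²γ*γ`. The first relation gives `‖γ‖ ≤ 1` in the
C*-algebra of operators, so `αα*` is invertible by a Neumann series. In any star ring, once `aa*`
is invertible, `P = 1 - a*(aa*)⁻¹a` is a self-adjoint idempotent with `aP = 0` and `Pa* = 0`, so
its fixed vectors are exactly `ker a`. Here every `e_{n+1,k}` is a multiple of `α* e_{n,k-1}`,
hence `P e_{n+1,k} = 0` and `ker α` is the closed span of the row `e_{0,k}`. Consequently `w̃`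
fixes `e_{n+1,k}` and acts as `γ` on `e_{0,k}`: it permutes the basis, which makes it unitary and
equal to `γ₀ + α₀*α₀`.
-/

open scoped InnerProductSpace ComplexConjugate ENNReal
open ContinuousLinearMap

section StarRing

variable {R : Type*} [Ring R] [StarRing R]

/-- When `a a*` is invertible, this is the orthogonal projection onto the kernel of `a`. -/
noncomputable def kerProjection (a : R) : R := 1 - star a * Ring.inverse (a * star a) * a

variable {a : R}

theorem mul_kerProjection (ha : IsUnit (a * star a)) : a * kerProjection a = 0 := by
  rw [kerProjection, mul_sub, mul_one, ← mul_assoc, ← mul_assoc, Ring.mul_inverse_cancel _ ha,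
    one_mul, sub_self]

theorem kerProjection_mul_star (ha : IsUnit (a * star a)) : kerProjection a * star a = 0 := by
  rw [kerProjection, sub_mul, one_mul, mul_assoc _ a, Ring.inverse_mul_cancel_right _ _ ha,
    sub_self]

theorem isStarProjection_kerProjection (ha : IsUnit (a * star a)) :
    IsStarProjection (kerProjection a) where
  isIdempotentElem := by
    rw [IsIdempotentElem]
    nth_rw 1 [kerProjection]
    rw [sub_mul (1 : R), one_mul, mul_assoc (star a * _), mul_kerProjection ha, mul_zero,
      sub_zero]
  isSelfAdjoint := by
    have hinv : IsSelfAdjoint (Ring.inverse (a * star a)) :=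
      (IsSelfAdjoint.mul_star_self a).ringInverse
    rw [isSelfAdjoint_iff, kerProjection, star_sub, star_one, star_mul, star_mul, star_star,
      hinv.star_eq, ← mul_assoc]

end StarRing

theorem ContinuousLinearMap.kerProjection_apply_eq_self_iff {𝕜 E : Type*} [RCLike 𝕜]
    [NormedAddCommGroup E] [InnerProductSpace 𝕜 E] [CompleteSpace E] {a : E →L[𝕜] E}
    (ha : IsUnit (a * star a)) (v : E) : kerProjection a v = v ↔ a v = 0 := by
  constructor
  · intro hv
    rw [← hv, ← mul_apply_eq_comp, mul_kerProjection ha, zero_apply]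
  · intro hv
    simp [kerProjection, hv]

theorem norm_le_one_of_star_mul_self_add_star_mul_self_eq_one {A : Type*} [CStarAlgebra A]
    [PartialOrder A] [StarOrderedRing A] {a b : A} (h : star a * a + star b * b = 1) :
    ‖b‖ ≤ 1 := by
  have hle : star b * b ≤ 1 := by
    rw [← h]
    exact le_add_of_nonneg_left (star_mul_self_nonneg a)
  have hsq : ‖b‖ * ‖b‖ ≤ 1 := by
    rw [← CStarRing.norm_star_mul_self]
    exact (CStarAlgebra.norm_le_one_iff_of_nonneg _ (star_mul_self_nonneg b)).2 hle
  nlinarith [norm_nonneg b]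

namespace lp

section Single

variable {ι 𝕜 : Type*} [RCLike 𝕜] [DecidableEq ι] {p : ℝ≥0∞} [Fact (1 ≤ p)]

theorem ext_single_one (hp : p ≠ ⊤) {A B : lp (fun _ : ι => 𝕜) p →L[𝕜] lp (fun _ : ι => 𝕜) p}
    (h : ∀ i, A (lp.single p i 1) = B (lp.single p i 1)) : A = B := by
  refine lp.ext_continuousLinearMap hp fun i => ContinuousLinearMap.ext fun a => ?_
  have hsingle : lp.single (E := fun _ => 𝕜) p i a = a • lp.single p i 1 := by
    rw [← lp.single_smul, smul_eq_mul, mul_one]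
  simp [hsingle, h i]

theorem mem_topologicalClosure_span_single_one (hp : p ≠ ⊤) {κ : Type*} (f : κ → ι)
    {x : lp (fun _ : ι => 𝕜) p} (hx : ∀ i ∉ Set.range f, x i = 0) :
    x ∈ (Submodule.span 𝕜 (Set.range fun k => lp.single p (f k) (1 : 𝕜))).topologicalClosure := by
  refine mem_closure_of_tendsto (lp.hasSum_single hp x) (Filter.Eventually.of_forall fun s => ?_)
  refine Submodule.sum_mem _ fun i _ => ?_
  by_cases hi : i ∈ Set.range f
  · obtain ⟨k, rfl⟩ := hi
    rw [← mul_one (x (f k)), ← smul_eq_mul, lp.single_smul]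
    exact Submodule.smul_mem _ _ (Submodule.subset_span ⟨k, rfl⟩)
  · simp [hx i hi]

theorem inner_single_one_left (i : ι) (x : lp (fun _ : ι => 𝕜) 2) :
    ⟪lp.single 2 i (1 : 𝕜), x⟫_𝕜 = x i := by
  simp [lp.inner_single_left]

theorem adjoint_apply_single_one (A : lp (fun _ : ι => 𝕜) 2 →L[𝕜] lp (fun _ : ι => 𝕜) 2)
    (i j : ι) : adjoint A (lp.single 2 i 1) j = conj (A (lp.single 2 j 1) i) := by
  rw [← inner_single_one_left, adjoint_inner_right, ← inner_conj_symm, inner_single_one_left]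

theorem mem_unitary_of_apply_single_one (σ : ι ≃ ι)
    {A : lp (fun _ : ι => 𝕜) 2 →L[𝕜] lp (fun _ : ι => 𝕜) 2}
    (hA : ∀ i, A (lp.single 2 i 1) = lp.single 2 (σ i) 1) :
    A ∈ unitary (lp (fun _ : ι => 𝕜) 2 →L[𝕜] lp (fun _ : ι => 𝕜) 2) := by
  have hadj : ∀ i, star A (lp.single 2 (σ i) 1) = lp.single 2 i 1 := fun i => by
    ext j
    rw [star_eq_adjoint, adjoint_apply_single_one, hA]
    by_cases hij : j = i
    · simp [hij]
    · simp [hij, σ.injective.ne_iff]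
  refine Unitary.mem_iff.2 ⟨ext_single_one (by simp) fun i => ?_,
    ext_single_one (by simp) fun i => ?_⟩
  · simp [hA, hadj]
  · simpa [hA] using congrArg A (hadj (σ.symm i))

end Single

end lp

theorem eNZ_ext {A B : l2NZ →L[ℂ] l2NZ} (h : ∀ n k, A (eNZ n k) = B (eNZ n k)) : A = B :=
  lp.ext_single_one (by simp) fun i => h i.1 i.2

theorem eNZ_apply (n : ℕ) (k : ℤ) (i : ℕ × ℤ) :
    eNZ n k i = if i = (n, k) then 1 else 0 :=
  Pi.single_apply _ _ _

theorem star_apply_eNZ_apply (A : l2NZ →L[ℂ] l2NZ) (n m : ℕ) (k j : ℤ) :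
    star A (eNZ n k) (m, j) = conj (A (eNZ m j) (n, k)) :=
  lp.adjoint_apply_single_one A (n, k) (m, j)

theorem mem_spanE0_of_apply_succ_eq_zero {v : l2NZ} (hv : ∀ n k, v (n + 1, k) = 0) :
    v ∈ spanE0 :=
  lp.mem_topologicalClosure_span_single_one (by simp) (fun k => ((0 : ℕ), k)) fun
    | (0, k), hi => absurd ⟨k, rfl⟩ hi
    | (n + 1, k), _ => hv n k

theorem inner_eNZ_left (n : ℕ) (k : ℤ) (v : l2NZ) : ⟪eNZ n k, v⟫_ℂ = v (n, k) :=
  lp.inner_single_one_left _ _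

theorem one_sub_pow_even_pos {t : ℝ} (ht : |t| < 1) (n : ℕ) : 0 < 1 - t ^ (2 * (n + 1)) := by
  have : t ^ (2 * (n + 1)) < 1 := by
    rw [pow_mul]
    exact pow_lt_one₀ (sq_nonneg t) ((sq_lt_one_iff_abs_lt_one t).2 ht) (by omega)
  linarith

theorem ofReal_sqrt_one_sub_pow_mul_self {t : ℝ} (ht : |t| ≤ 1) (n : ℕ) :
    (Real.sqrt (1 - t ^ (2 * (n + 1))) : ℂ) * Real.sqrt (1 - t ^ (2 * (n + 1)))
      = 1 - (t : ℂ) ^ (2 * (n + 1)) := by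
  have hpow : t ^ (2 * (n + 1)) ≤ 1 := by
    rw [pow_mul]
    exact pow_le_one₀ (sq_nonneg t) (sq_le_one_iff_abs_le_one t |>.2 ht)
  rw [← Complex.ofReal_mul, Real.mul_self_sqrt (by linarith)]
  push_cast
  ring

namespace IsAlphaGamma

variable {t : ℝ} {α γ : l2NZ →L[ℂ] l2NZ}

theorem star_alpha_apply (h : IsAlphaGamma t α γ) (n : ℕ) (k : ℤ) :
    star α (eNZ n k) = (Real.sqrt (1 - t ^ (2 * (n + 1))) : ℂ) • eNZ (n + 1) (k + 1) := by
  ext ⟨m, j⟩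
  rw [star_apply_eNZ_apply]
  rcases m with _ | m
  · simp only [h.2.1, lp.coeFn_smul, Pi.smul_apply, eNZ_apply, lp.coeFn_zero]
    simp
  · simp only [h.1, lp.coeFn_smul, Pi.smul_apply, eNZ_apply]
    split_ifs with h1 h2 h2 <;> simp_all

theorem star_gamma_apply (h : IsAlphaGamma t α γ) (n : ℕ) (k : ℤ) :
    star γ (eNZ n k) = ((t ^ n : ℝ) : ℂ) • eNZ n (k + 1) := by
  ext ⟨m, j⟩
  rw [star_apply_eNZ_apply]
  simp only [h.2.2, lp.coeFn_smul, Pi.smul_apply, eNZ_apply]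
  split_ifs with h1 h2 h2 <;> simp_all

theorem star_alpha_mul_alpha_add_star_gamma_mul_gamma (h : IsAlphaGamma t α γ) (ht : |t| ≤ 1) :
    star α * α + star γ * γ = 1 := by
  refine eNZ_ext fun n k => ?_
  rcases n with _ | n
  · simp [h.2.1, h.2.2, h.star_gamma_apply]
  · simp only [add_apply, mul_apply_eq_comp, one_apply_eq_self, h.1, h.2.2, map_smul,
      h.star_alpha_apply, h.star_gamma_apply, sub_add_cancel, smul_smul, ← add_smul]
    convert one_smul ℂ (eNZ (n + 1) k) using 2
    rw [ofReal_sqrt_one_sub_pow_mul_self ht]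
    push_cast
    ring

theorem alpha_mul_star_alpha (h : IsAlphaGamma t α γ) (ht : |t| ≤ 1) :
    α * star α = 1 - ((t ^ 2 : ℝ) : ℂ) • (star γ * γ) := by
  refine eNZ_ext fun n k => ?_
  simp only [sub_apply, smul_apply, mul_apply_eq_comp, one_apply_eq_self, h.1, h.2.2, map_smul,
    h.star_alpha_apply, h.star_gamma_apply, add_sub_cancel_right, sub_add_cancel, smul_smul]
  have hpow : ((t ^ 2 : ℝ) : ℂ) * (((t ^ n : ℝ) : ℂ) * ((t ^ n : ℝ) : ℂ))
      = (t : ℂ) ^ (2 * (n + 1)) := by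
    push_cast
    ring
  rw [ofReal_sqrt_one_sub_pow_mul_self ht, hpow, sub_smul, one_smul]

theorem isUnit_alpha_mul_star_alpha (h : IsAlphaGamma t α γ) (ht : |t| < 1) :
    IsUnit (α * star α) := by
  have hγ : ‖γ‖ ≤ 1 := norm_le_one_of_star_mul_self_add_star_mul_self_eq_one
    (h.star_alpha_mul_alpha_add_star_gamma_mul_gamma ht.le)
  have ht2 : t ^ 2 < 1 := (sq_lt_one_iff_abs_lt_one t).2 ht
  rw [h.alpha_mul_star_alpha ht.le]
  refine isUnit_one_sub_of_norm_lt_one ?_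
  calc ‖((t ^ 2 : ℝ) : ℂ) • (star γ * γ)‖ = t ^ 2 * (‖γ‖ * ‖γ‖) := by
        rw [norm_smul, show ‖star γ * γ‖ = ‖γ‖ * ‖γ‖ from norm_adjoint_comp_self γ,
          Complex.norm_real, Real.norm_of_nonneg (sq_nonneg t)]
    _ ≤ t ^ 2 * 1 := by gcongr; nlinarith [norm_nonneg γ]
    _ < 1 := by linarith

theorem eNZ_succ_eq_smul_star_alpha (h : IsAlphaGamma t α γ) (ht : |t| < 1) (n : ℕ) (k : ℤ) :
    eNZ (n + 1) k = ((Real.sqrt (1 - t ^ (2 * (n + 1))) : ℂ))⁻¹ • star α (eNZ n (k - 1)) := by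
  have hs : (Real.sqrt (1 - t ^ (2 * (n + 1))) : ℂ) ≠ 0 := by
    exact_mod_cast (Real.sqrt_pos.2 (one_sub_pow_even_pos ht n)).ne'
  rw [h.star_alpha_apply, sub_add_cancel, smul_smul, inv_mul_cancel₀ hs, one_smul]

theorem alpha_apply_eq_zero_iff (h : IsAlphaGamma t α γ) (ht : |t| < 1) (v : l2NZ) :
    α v = 0 ↔ v ∈ spanE0 := by
  constructor
  · intro hv
    refine mem_spanE0_of_apply_succ_eq_zero fun n k => ?_
    rw [← inner_eNZ_left, h.eNZ_succ_eq_smul_star_alpha ht, inner_smul_left, star_eq_adjoint,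
      adjoint_inner_left, hv, inner_zero_right, mul_zero]
  · intro hv
    suffices spanE0 ≤ LinearMap.ker (α : l2NZ →ₗ[ℂ] l2NZ) from this hv
    refine Submodule.topologicalClosure_minimal _ ?_ (isClosed_ker α)
    rw [Submodule.span_le]
    rintro _ ⟨k, rfl⟩
    exact h.2.1 k

theorem kerProjection_apply_eNZ_zero (h : IsAlphaGamma t α γ) (ht : |t| < 1) (k : ℤ) :
    kerProjection α (eNZ 0 k) = eNZ 0 k :=
  (kerProjection_apply_eq_self_iff (h.isUnit_alpha_mul_star_alpha ht) _).2 (h.2.1 k)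

theorem kerProjection_apply_eNZ_succ (h : IsAlphaGamma t α γ) (ht : |t| < 1) (n : ℕ) (k : ℤ) :
    kerProjection α (eNZ (n + 1) k) = 0 := by
  rw [h.eNZ_succ_eq_smul_star_alpha ht, map_smul, ← mul_apply_eq_comp,
    kerProjection_mul_star (h.isUnit_alpha_mul_star_alpha ht), zero_apply, smul_zero]

theorem wTilde_apply_eNZ_succ (h : IsAlphaGamma t α γ) (ht : |t| < 1) (n : ℕ) (k : ℤ) :
    (1 + (γ - 1) * kerProjection α) (eNZ (n + 1) k) = eNZ (n + 1) k := by
  simp [h.kerProjection_apply_eNZ_succ ht]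

theorem wTilde_apply_eNZ_zero (h : IsAlphaGamma t α γ) (ht : |t| < 1) (k : ℤ) :
    (1 + (γ - 1) * kerProjection α) (eNZ 0 k) = eNZ 0 (k - 1) := by
  simp [h.kerProjection_apply_eNZ_zero ht, h.2.2]

end IsAlphaGamma

/-- The permutation `(0, k) ↦ (0, k - 1)`, `(n + 1, k) ↦ (n + 1, k)` of `ℕ × ℤ`. -/
def shiftRowZero : ℕ × ℤ ≃ ℕ × ℤ :=
  Equiv.prodShear (Equiv.refl ℕ) fun n => if n = 0 then Equiv.subRight 1 else Equiv.refl ℤ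

section RowZeroShift

variable {W : l2NZ →L[ℂ] l2NZ}

theorem mem_unitary_of_shiftRowZero (hW1 : ∀ (n : ℕ) (k : ℤ), W (eNZ (n + 1) k) = eNZ (n + 1) k)
    (hW0 : ∀ k : ℤ, W (eNZ 0 k) = eNZ 0 (k - 1)) : W ∈ unitary (l2NZ →L[ℂ] l2NZ) :=
  lp.mem_unitary_of_apply_single_one shiftRowZero fun
    | (0, k) => by simpa [shiftRowZero, eNZ] using hW0 k
    | (n + 1, k) => by simpa [shiftRowZero, eNZ] using hW1 n k

theorem eq_gamma_add_star_alpha_mul_alpha_of_shiftRowZero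
    (hW1 : ∀ (n : ℕ) (k : ℤ), W (eNZ (n + 1) k) = eNZ (n + 1) k)
    (hW0 : ∀ k : ℤ, W (eNZ 0 k) = eNZ 0 (k - 1)) {α₀ γ₀ : l2NZ →L[ℂ] l2NZ}
    (h0 : IsAlphaGamma 0 α₀ γ₀) : W = γ₀ + star α₀ * α₀ := by
  refine eNZ_ext fun n k => ?_
  rcases n with _ | n
  · simp [hW0, h0.2.1, h0.2.2]
  · simp [hW1, h0.1, h0.2.2, h0.star_alpha_apply]

end RowZeroShift

open ContinuousLinearMap in
/-- **Statement 12.** Fix `0 < q < 1` and write `α := α_q`, `γ := γ_q`. Then: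
(i) `αα*` is invertible; (ii) `P := 1 − α*(αα*)⁻¹α` is the orthogonal projection onto the
closed linear span of `{e_{0,k} : k ∈ ℤ}` (i.e. `P` is a self-adjoint idempotent whose
fixed vectors are exactly that subspace); (iii) `w̃ := 1 + (γ − 1)P` is unitary and
satisfies `w̃ e_{n,k} = e_{n,k}` for `n ≥ 1` and `w̃ e_{0,k} = e_{0,k−1}`;
(iv) `w̃ = γ₀ + α₀*α₀`. -/
theorem wTilde_properties (q : ℝ) (hq0 : 0 < q) (hq1 : q < 1)
    (α γ α₀ γ₀ : l2NZ →L[ℂ] l2NZ)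
    (h : IsAlphaGamma q α γ) (h0 : IsAlphaGamma 0 α₀ γ₀) :
    IsUnit (α * adjoint α) ∧
    (adjoint (1 - adjoint α * Ring.inverse (α * adjoint α) * α)
        = 1 - adjoint α * Ring.inverse (α * adjoint α) * α ∧
      (1 - adjoint α * Ring.inverse (α * adjoint α) * α)
          * (1 - adjoint α * Ring.inverse (α * adjoint α) * α)
        = 1 - adjoint α * Ring.inverse (α * adjoint α) * α ∧
      ∀ v : l2NZ,
        (1 - adjoint α * Ring.inverse (α * adjoint α) * α) v = v ↔ v ∈ spanE0) ∧
    (adjoint (1 + (γ - 1) * (1 - adjoint α * Ring.inverse (α * adjoint α) * α))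
          * (1 + (γ - 1) * (1 - adjoint α * Ring.inverse (α * adjoint α) * α)) = 1 ∧
      (1 + (γ - 1) * (1 - adjoint α * Ring.inverse (α * adjoint α) * α))
          * adjoint (1 + (γ - 1) * (1 - adjoint α * Ring.inverse (α * adjoint α) * α))
        = 1 ∧
      (∀ (n : ℕ) (k : ℤ),
        (1 + (γ - 1) * (1 - adjoint α * Ring.inverse (α * adjoint α) * α))
          (eNZ (n + 1) k) = eNZ (n + 1) k) ∧
      (∀ k : ℤ,
        (1 + (γ - 1) * (1 - adjoint α * Ring.inverse (α * adjoint α) * α))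
          (eNZ 0 k) = eNZ 0 (k - 1))) ∧
    1 + (γ - 1) * (1 - adjoint α * Ring.inverse (α * adjoint α) * α)
      = γ₀ + adjoint α₀ * α₀ := by
  simp only [← star_eq_adjoint]
  have hq : |q| < 1 := abs_lt.2 ⟨by linarith, hq1⟩
  have hunit := h.isUnit_alpha_mul_star_alpha hq
  have hP := isStarProjection_kerProjection hunit
  have hW1 := h.wTilde_apply_eNZ_succ hq
  have hW0 := h.wTilde_apply_eNZ_zero hq
  have hU := mem_unitary_of_shiftRowZero hW1 hW0
  exact ⟨hunit,
    ⟨hP.isSelfAdjoint, hP.isIdempotentElem,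
      fun v => (kerProjection_apply_eq_self_iff hunit v).trans (h.alpha_apply_eq_zero_iff hq v)⟩,
    ⟨hU.1, hU.2, hW1, hW0⟩, eq_gamma_add_star_alpha_mul_alpha_of_shiftRowZero hW1 hW0 h0⟩
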